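/- arXiv:1908.09491 — 2 statements merged into one kernel-verified Lean document; each statement's English description precedes it below -/
import Mathlib

section
/- Suppose F is an entire function and z_1, z_2 ∈ ℂ are distinct points such that F has no zeros on the closed segment [z_1, z_2]. Then for every R > T := |z_2 − z_1|, |Re{(1/(2πi)) ∫_{z_1}^{z_2} F'(z)/F(z) dz}| ≤ (max_{|ζ| ≤ R} log|F(z_1 + ζ)| − log|F(z_1)|)/(2 log(R/T)) + 1/2, where the integral is taken along the straight line segment from z_1 to z_2. -/
/-!
Put `w = z₂ - z₁` and `L(t) = ∫₀ᵗ F'(z₁ + sw) w / F(z₁ + sw) ds`, so that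
`F(z₁ + tw) = F(z₁) exp L(t)` on `[0, 1]` and the quantity to bound is `Im L(1) / 2π`.
Between consecutive zeros of `cos (Im L)` the function `Im L` moves by at most `π`, hence
`|Im L(1)| ≤ (n + 1) π` with `n` the number of such zeros in `(0, 1)`. After rotating `F` so that
`F(z₁) > 0`, these are real zeros in the unit disc of the entire function
`G(ζ) = (ψ(ζ) + conj ψ(conj ζ)) / 2`, `ψ(ζ) = F(z₁ + ζw)`, which equals `Re ψ` on the real axis.
Jensen's inequality for `G` on the disc of radius `R / |w|` gives
`n log (R / |w|) ≤ max_{|ζ| ≤ R} log |F(z₁ + ζ)| - log |F(z₁)|`.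
-/

open Complex intervalIntegral

section

open Real Set

theorem Real.exists_cos_eq_zero_mem_Ioo {x y : ℝ} (h : x + π < y) :
    ∃ θ ∈ Ioo x y, cos θ = 0 := by
  set k : ℤ := ⌊(x - π / 2) / π⌋ + 1
  have hk₁ : (x - π / 2) / π < k := by push_cast [k]; exact Int.lt_floor_add_one _
  have hk₂ : (k : ℝ) - 1 ≤ (x - π / 2) / π := by push_cast [k]; simpa using Int.floor_le _
  rw [div_lt_iff₀ pi_pos] at hk₁
  rw [le_div_iff₀ pi_pos] at hk₂
  refine ⟨π / 2 + k * π, ⟨by linarith, by linarith⟩, ?_⟩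
  rw [cos_add_int_mul_pi, cos_pi_div_two, mul_zero]

theorem abs_sub_le_pi_of_cos_ne_zero {g : ℝ → ℝ} {a b : ℝ} (hab : a ≤ b)
    (hg : ContinuousOn g (Icc a b)) (h : ∀ t ∈ Ioo a b, Real.cos (g t) ≠ 0) :
    |g b - g a| ≤ π := by
  by_contra! hlt
  rcases lt_abs.mp hlt with hlt | hlt
  · obtain ⟨θ, hθ, hcos⟩ := exists_cos_eq_zero_mem_Ioo (by linarith : g a + π < g b)
    obtain ⟨t, ht, rfl⟩ := intermediate_value_Ioo hab hg hθ
    exact h t ht hcos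
  · obtain ⟨θ, hθ, hcos⟩ := exists_cos_eq_zero_mem_Ioo (by linarith : g b + π < g a)
    obtain ⟨t, ht, rfl⟩ := intermediate_value_Ioo' hab hg hθ
    exact h t ht hcos

theorem abs_sub_le_mul_pi_of_cos_eq_zero_mem {g : ℝ → ℝ} {a b : ℝ} (S : Finset ℝ)
    (hab : a ≤ b) (hg : ContinuousOn g (Icc a b))
    (hS : ∀ t ∈ Ioo a b, Real.cos (g t) = 0 → t ∈ S) :
    |g b - g a| ≤ (S.card + 1) * π := by
  -- peel off the largest point `m` of `S`: `cos ∘ g` has no zero on `(max a m, b)`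
  induction S using Finset.induction_on_max generalizing b with
  | empty =>
    simpa using abs_sub_le_pi_of_cos_ne_zero hab hg fun t ht h ↦ by simpa using hS t ht h
  | insert m S hlt ih =>
    have hcard : ((insert m S).card : ℝ) = S.card + 1 := by
      rw [Finset.card_insert_of_notMem fun hm ↦ (hlt m hm).false]; push_cast; ring
    rw [hcard]
    rcases le_or_gt b m with hbm | hbm
    · refine (ih hab hg fun t ht h ↦ ?_).trans (by linarith [pi_pos])
      rcases Finset.mem_insert.mp (hS t ht h) with rfl | htS
      · exact absurd ht.2 hbm.not_gt
      · exact htS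
    have hzero_above : ∀ t ∈ Ioo (max a m) b, Real.cos (g t) ≠ 0 := fun t ht h ↦ by
      have ht' : t ∈ Ioo a b := ⟨(le_max_left a m).trans_lt ht.1, ht.2⟩
      rcases Finset.mem_insert.mp (hS t ht' h) with rfl | htS
      · exact (le_max_right a t).not_gt ht.1
      · exact (hlt t htS).not_ge ((le_max_right a m).trans ht.1.le)
    have hupper := abs_sub_le_pi_of_cos_ne_zero (max_le hab hbm.le)
      (hg.mono (Icc_subset_Icc (le_max_left a m) le_rfl)) hzero_above
    rcases le_total m a with hma | ham
    · rw [max_eq_left hma] at hupper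
      nlinarith [pi_pos, (S.card.cast_nonneg : (0 : ℝ) ≤ S.card)]
    rw [max_eq_right ham] at hupper
    have hlower := ih ham (hg.mono (Icc_subset_Icc le_rfl hbm.le)) fun t ht h ↦ by
      rcases Finset.mem_insert.mp (hS t ⟨ht.1, ht.2.trans hbm⟩ h) with rfl | htS
      · exact absurd ht.2 (lt_irrefl _)
      · exact htS
    calc |g b - g a| ≤ |g b - g m| + |g m - g a| := abs_sub_le ..
      _ ≤ π + (S.card + 1) * π := add_le_add hupper hlower
      _ = (S.card + 1 + 1) * π := by ring

end

section

open Metric MeromorphicOn Set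
open scoped ComplexConjugate

theorem hasDerivAt_integral_div_of_ne_zero {f f' : ℝ → ℂ} (hf : ∀ t, HasDerivAt f (f' t) t)
    (hf' : Continuous f') {a b : ℝ} (hne : ∀ t ∈ Icc a b, f t ≠ 0) :
    ∀ t ∈ Icc a b, HasDerivAt (fun u ↦ ∫ s in a..u, f' s / f s) (f' t / f t) t := by
  have hfc : Continuous f := continuous_iff_continuousAt.2 fun t ↦ (hf t).continuousAt
  set U := {t | f t ≠ 0}
  have hU : IsOpen U := isOpen_ne_fun hfc continuous_const
  have hcont : ContinuousOn (fun s ↦ f' s / f s) U :=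
    hf'.continuousOn.div hfc.continuousOn fun _ h ↦ h
  intro t ht
  have hsub : uIcc a t ⊆ U := fun s hs ↦ hne s <| by
    rw [uIcc_of_le ht.1] at hs; exact ⟨hs.1, hs.2.trans ht.2⟩
  exact integral_hasDerivAt_right ((hcont.mono hsub).intervalIntegrable)
    (hcont.stronglyMeasurableAtFilter hU t (hne t ht))
    ((hcont t (hne t ht)).continuousAt (hU.mem_nhds (hne t ht)))

theorem eq_mul_exp_integral_div_of_ne_zero {f f' : ℝ → ℂ} (hf : ∀ t, HasDerivAt f (f' t) t)
    (hf' : Continuous f') {a b : ℝ} (hne : ∀ t ∈ Icc a b, f t ≠ 0) :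
    ∀ t ∈ Icc a b, f t = f a * exp (∫ s in a..t, f' s / f s) := by
  set L := fun u ↦ ∫ s in a..u, f' s / f s
  have hL := hasDerivAt_integral_div_of_ne_zero hf hf' hne
  have hconst : ∀ t ∈ Icc a b, f t * exp (-L t) = f a * exp (-L a) := by
    refine constant_of_has_deriv_right_zero (fun t ht ↦ ?_) fun t ht ↦ ?_
    · exact ((hf t).continuousAt.mul (hL t ht).continuousAt.neg.cexp).continuousWithinAt
    · have ht' := Ico_subset_Icc_self ht
      refine ((hf t).mul (hL t ht').neg.cexp).hasDerivWithinAt.congr_deriv ?_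
      field_simp [hne t ht']
      ring
  intro t ht
  have := hconst t ht
  simp only [L, integral_same, neg_zero, exp_zero, mul_one] at this
  rw [← this, mul_assoc, ← exp_add, neg_add_cancel, exp_zero, mul_one]

theorem one_le_divisor_of_eq_zero {f : ℂ → ℂ} {c u : ℂ} {r : ℝ}
    (hf : AnalyticOnNhd ℂ f (closedBall c r)) (hc : f c ≠ 0) (hu : u ∈ closedBall c r)
    (hfu : f u = 0) : 1 ≤ divisor f (closedBall c r) u := by
  have hcr : c ∈ closedBall c r := mem_closedBall_self (dist_nonneg.trans hu)
  have hfin : analyticOrderAt f u ≠ ⊤ :=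
    hf.analyticOrderAt_ne_top_of_isPreconnected (convex_closedBall c r).isPreconnected hcr hu
      ((hf c hcr).analyticOrderAt_eq_zero.mpr hc ▸ ENat.zero_ne_top)
  have hpos : analyticOrderAt f u ≠ 0 := (hf u hu).analyticOrderAt_ne_zero.mpr hfu
  obtain ⟨n, hn⟩ := ENat.ne_top_iff_exists.mp hfin
  rw [hf.divisor_apply hu, ← hn, ENat.map_natCast, WithTop.untop₀_coe]
  rw [← hn] at hpos
  norm_cast at hpos ⊢
  omega

theorem finite_setOf_eq_zero_closedBall {f : ℂ → ℂ} {c : ℂ} {r : ℝ}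
    (hf : AnalyticOnNhd ℂ f (closedBall c r)) (hc : f c ≠ 0) :
    {u ∈ closedBall c r | f u = 0}.Finite :=
  ((divisor f (closedBall c r)).finiteSupport (isCompact_closedBall c r)).subset
    fun _ ⟨hu, hfu⟩ ↦ (zero_lt_one.trans_le (one_le_divisor_of_eq_zero hf hc hu hfu)).ne'

theorem card_le_finsum_divisor {f : ℂ → ℂ} {c : ℂ} {r : ℝ}
    (hf : AnalyticOnNhd ℂ f (closedBall c r)) (hc : f c ≠ 0) {S : Finset ℂ}
    (hS : ∀ s ∈ S, s ∈ closedBall c r ∧ f s = 0) :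
    (S.card : ℤ) ≤ ∑ᶠ u, divisor f (closedBall c r) u := by
  set D := divisor f (closedBall c r)
  have hfin := D.finiteSupport (isCompact_closedBall c r)
  rw [finsum_eq_sum_of_support_subset (s := S ∪ hfin.toFinset) _ (by simp)]
  calc (S.card : ℤ) = ∑ s ∈ S, 1 := by simp
    _ ≤ ∑ s ∈ S, D s :=
      Finset.sum_le_sum fun s hs ↦ one_le_divisor_of_eq_zero hf hc (hS s hs).1 (hS s hs).2
    _ ≤ ∑ s ∈ S ∪ hfin.toFinset, D s :=
      Finset.sum_le_sum_of_subset_of_nonneg Finset.subset_union_left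
        fun u _ _ ↦ hf.divisor_nonneg u

theorem card_mul_log_le_of_eq_zero {f : ℂ → ℂ} {c : ℂ} {r R B : ℝ}
    (hf : AnalyticOnNhd ℂ f (closedBall c R)) (hc : f c ≠ 0) (hr : 0 < r) (hrR : r < R)
    (hB : ∀ z ∈ closedBall c R, ‖f z‖ ≤ B) {S : Finset ℂ}
    (hS : ∀ s ∈ S, s ∈ closedBall c r ∧ f s = 0) :
    S.card * Real.log (R / r) ≤ Real.log (B / ‖f c‖) := by
  -- `sum_divisor_le` needs a bound `≥ 1`; normalizing `f c` to `1` provides one.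
  set g := fun z ↦ f z / f c
  have hg : AnalyticOnNhd ℂ g (closedBall c |R|) := by
    rw [abs_of_pos (hr.trans hrR)]; exact hf.div_const
  have hgc : g c = 1 := div_self hc
  have hgB : ∀ z ∈ sphere c |R|, ‖g z‖ ≤ B / ‖f c‖ := fun z hz ↦ by
    rw [abs_of_pos (hr.trans hrR)] at hz
    simp only [g, norm_div]
    gcongr
    exact hB z (sphere_subset_closedBall hz)
  have hB1 : 1 ≤ B / ‖f c‖ := by
    rw [one_le_div (norm_pos_iff.mpr hc)]
    exact hB c (mem_closedBall_self (hr.trans hrR).le)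
  have hjensen := hg.sum_divisor_le (by rwa [abs_of_pos hr])
    (by rwa [abs_of_pos hr, abs_of_pos (hr.trans hrR)]) hB1 (by simp [hgc]) hgB
  rw [hgc, norm_one, div_one, abs_of_pos hr] at hjensen
  have hcard := card_le_finsum_divisor (hg.mono (closedBall_subset_closedBall (by
      rw [abs_of_pos (hr.trans hrR)]; exact hrR.le))) (by simp [hgc])
    fun s hs ↦ ⟨(hS s hs).1, by simp [g, (hS s hs).2]⟩
  rw [← le_div_iff₀ (Real.log_pos ((one_lt_div hr).mpr hrR))]
  exact (Int.cast_le.mpr hcard).trans hjensen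

noncomputable def realPartExtension (ψ : ℂ → ℂ) (ζ : ℂ) : ℂ :=
  (ψ ζ + conj (ψ (conj ζ))) / 2

theorem Differentiable.realPartExtension {ψ : ℂ → ℂ} (hψ : Differentiable ℂ ψ) :
    Differentiable ℂ (realPartExtension ψ) := by
  have hconj : Differentiable ℂ (conj ∘ ψ ∘ conj) := fun ζ ↦
    differentiableAt_conj_conj_iff.mpr (hψ _)
  exact (hψ.add hconj).div_const 2

theorem realPartExtension_ofReal (ψ : ℂ → ℂ) (t : ℝ) :
    realPartExtension ψ t = (ψ t).re := by
  rw [realPartExtension, conj_ofReal, add_conj]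
  push_cast
  ring

theorem norm_realPartExtension_le {ψ : ℂ → ℂ} {r B : ℝ}
    (hB : ∀ ζ ∈ closedBall 0 r, ‖ψ ζ‖ ≤ B) :
    ∀ ζ ∈ closedBall 0 r, ‖realPartExtension ψ ζ‖ ≤ B := fun ζ hζ ↦ by
  have hζ' : conj ζ ∈ closedBall 0 r := by simpa using hζ
  calc ‖realPartExtension ψ ζ‖ ≤ (‖ψ ζ‖ + ‖conj (ψ (conj ζ))‖) / 2 := by
        rw [realPartExtension, norm_div, Complex.norm_two]
        gcongr
        exact norm_add_le _ _
    _ ≤ B := by rw [norm_conj]; linarith [hB ζ hζ, hB _ hζ']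

theorem abs_im_sub_le_of_eq_mul_exp {ψ : ℂ → ℂ} (hψ : Differentiable ℂ ψ) (hψ0 : ψ 0 ≠ 0)
    {ρ B : ℝ} (hρ : 1 < ρ) (hB : ∀ ζ ∈ closedBall 0 ρ, ‖ψ ζ‖ ≤ B) {L : ℝ → ℂ}
    (hL : ContinuousOn L (Icc 0 1)) (hψL : ∀ t ∈ Icc (0 : ℝ) 1, ψ t = ψ 0 * exp (L t)) :
    |(L 1).im - (L 0).im| ≤ (Real.log (B / ‖ψ 0‖) / Real.log ρ + 1) * Real.pi := by
  set G := realPartExtension fun ζ ↦ (‖ψ 0‖ / ψ 0) * ψ ζ with hGdef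
  have hG : AnalyticOnNhd ℂ G (closedBall 0 ρ) := fun z _ ↦
    ((differentiable_const _).mul hψ).realPartExtension.analyticAt z
  have hGt : ∀ t ∈ Icc (0 : ℝ) 1,
      G t = (‖ψ 0‖ * (Real.exp (L t).re * Real.cos (L t).im) : ℝ) := fun t ht ↦ by
    rw [hGdef, realPartExtension_ofReal, hψL t ht, ← mul_assoc, div_mul_cancel₀ _ hψ0,
      re_ofReal_mul, exp_re]
  have hG0 : G 0 = ‖ψ 0‖ := by
    simpa [div_mul_cancel₀ _ hψ0] using realPartExtension_ofReal (fun ζ ↦ (‖ψ 0‖ / ψ 0) * ψ ζ) 0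
  have hG0ne : G 0 ≠ 0 := by simpa [hG0] using hψ0
  have hGB : ∀ ζ ∈ closedBall 0 ρ, ‖G ζ‖ ≤ B := norm_realPartExtension_le fun ζ hζ ↦ by
    simpa [norm_mul, norm_div, div_self (norm_ne_zero_iff.mpr hψ0)] using hB ζ hζ
  have hfin : {t : ℝ | (t : ℂ) ∈ {u ∈ closedBall 0 1 | G u = 0}}.Finite :=
    (finite_setOf_eq_zero_closedBall (hG.mono (closedBall_subset_closedBall hρ.le))
      hG0ne).preimage ofReal_injective.injOn
  set S := hfin.toFinset
  have harg : |(L 1).im - (L 0).im| ≤ (S.card + 1) * Real.pi :=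
    abs_sub_le_mul_pi_of_cos_eq_zero_mem S zero_le_one (continuous_im.comp_continuousOn hL)
      fun t ht hcos ↦ by
        have ht' := Ioo_subset_Icc_self ht
        simp only [Function.comp_apply] at hcos
        simp [S, abs_of_pos ht.1, ht.2.le, hGt t ht', hcos]
  have hcount := card_mul_log_le_of_eq_zero hG hG0ne one_pos hρ hGB (S := S.image ofReal)
    fun s hs ↦ by obtain ⟨t, ht, rfl⟩ := Finset.mem_image.mp hs; simpa [S] using ht
  rw [Finset.card_image_of_injective _ ofReal_injective, div_one, hG0, norm_real,
    norm_norm] at hcount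
  have hS : (S.card : ℝ) ≤ Real.log (B / ‖ψ 0‖) / Real.log ρ :=
    (le_div_iff₀ (Real.log_pos hρ)).mpr hcount
  exact harg.trans (by gcongr)

theorem abs_im_integral_logDeriv_line_le {F : ℂ → ℂ} (hF : Differentiable ℂ F) {z w : ℂ}
    (hne : ∀ t ∈ Icc (0 : ℝ) 1, F (z + t * w) ≠ 0) {ρ B : ℝ} (hρ : 1 < ρ)
    (hB : ∀ ζ ∈ closedBall 0 ρ, ‖F (z + ζ * w)‖ ≤ B) :
    |(∫ t in (0 : ℝ)..1, deriv F (z + t * w) / F (z + t * w) * w).im|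
      ≤ (Real.log (B / ‖F z‖) / Real.log ρ + 1) * Real.pi := by
  have hline (t : ℝ) :
      HasDerivAt (fun s : ℝ ↦ F (z + s * w)) (deriv F (z + t * w) * w) t := by
    have := ((hasDerivAt_id (t : ℂ)).mul_const w).const_add z
    simpa using ((hF _).hasDerivAt.comp (t : ℂ) this).comp_ofReal
  have hderiv : Continuous fun t : ℝ ↦ deriv F (z + t * w) * w :=
    ((hF.contDiff (n := 1)).continuous_deriv le_rfl).comp (by fun_prop) |>.mul continuous_const
  set L := fun u : ℝ ↦ ∫ s in (0 : ℝ)..u, deriv F (z + s * w) * w / F (z + s * w)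
  have hLcont : ContinuousOn L (Icc 0 1) := fun t ht ↦
    (hasDerivAt_integral_div_of_ne_zero hline hderiv hne t ht).continuousAt.continuousWithinAt
  have hexp (t : ℝ) (ht : t ∈ Icc (0 : ℝ) 1) : F (z + t * w) = F (z + 0 * w) * exp (L t) := by
    simpa using eq_mul_exp_integral_div_of_ne_zero hline hderiv hne t ht
  have hwind := abs_im_sub_le_of_eq_mul_exp (ψ := fun ζ ↦ F (z + ζ * w)) (hF.comp (by fun_prop))
    (by simpa using hne 0 (left_mem_Icc.mpr zero_le_one)) hρ hB hLcont hexp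
  simpa [L, div_mul_eq_mul_div] using hwind

end

theorem norm_le_exp_sSup_log_norm {X E : Type*} [TopologicalSpace X] [NormedAddCommGroup E]
    {f : X → E} (hf : Continuous f) {K : Set X} (hK : IsCompact K) {x : X} (hx : x ∈ K) :
    ‖f x‖ ≤ Real.exp (sSup ((fun y ↦ Real.log ‖f y‖) '' K)) := by
  rcases eq_or_ne (f x) 0 with h | h
  · simpa [h] using (Real.exp_pos _).le
  obtain ⟨C, hC⟩ := hK.exists_bound_of_continuousOn hf.continuousOn
  have hbdd : BddAbove ((fun y ↦ Real.log ‖f y‖) '' K) := ⟨C, by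
    rintro _ ⟨y, hy, rfl⟩
    exact (Real.log_le_self (norm_nonneg _)).trans (by simpa using hC y hy)⟩
  calc ‖f x‖ = Real.exp (Real.log ‖f x‖) := (Real.exp_log (norm_pos_iff.mpr h)).symm
    _ ≤ _ := Real.exp_le_exp.mpr (le_csSup hbdd ⟨x, hx, rfl⟩)

theorem re_one_div_two_pi_I_mul (z : ℂ) :
    (1 / (2 * Real.pi * I) * z).re = z.im / (2 * Real.pi) := by
  simp [div_eq_inv_mul, mul_re, inv_re, inv_im, normSq]

/-- Backlund's lemma: bound on the real part of the logarithmic integral of an entire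
function along a segment free of zeros. -/
theorem backlund_lemma (F : ℂ → ℂ) (hF : Differentiable ℂ F)
    (z₁ z₂ : ℂ) (hne : z₁ ≠ z₂)
    (hzero : ∀ z ∈ segment ℝ z₁ z₂, F z ≠ 0)
    (R : ℝ) (hR : ‖z₂ - z₁‖ < R) :
    |((1 / (2 * Real.pi * Complex.I)) *
        ∫ t in (0:ℝ)..1,
          (deriv F (z₁ + t * (z₂ - z₁)) / F (z₁ + t * (z₂ - z₁))) * (z₂ - z₁)).re|
      ≤ (sSup ((fun ζ : ℂ => Real.log ‖F (z₁ + ζ)‖) ''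
            Metric.closedBall (0 : ℂ) R)
          - Real.log ‖F z₁‖)
        / (2 * Real.log (R / ‖z₂ - z₁‖)) + 1 / 2 := by
  set w := z₂ - z₁
  set M := sSup ((fun ζ : ℂ => Real.log ‖F (z₁ + ζ)‖) '' Metric.closedBall (0 : ℂ) R)
  have hw : 0 < ‖w‖ := norm_pos_iff.mpr (sub_ne_zero.mpr hne.symm)
  have hρ : 1 < R / ‖w‖ := (one_lt_div hw).mpr hR
  have hFne (t : ℝ) (ht : t ∈ Set.Icc (0 : ℝ) 1) : F (z₁ + t * w) ≠ 0 :=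
    hzero _ (by rw [segment_eq_image']; exact ⟨t, ht, by simp [real_smul, w]⟩)
  have hbound (ζ : ℂ) (hζ : ζ ∈ Metric.closedBall 0 (R / ‖w‖)) :
      ‖F (z₁ + ζ * w)‖ ≤ Real.exp M := by
    refine norm_le_exp_sSup_log_norm (f := fun ζ ↦ F (z₁ + ζ)) (hF.continuous.comp (by fun_prop))
      (isCompact_closedBall 0 R) ?_
    rw [mem_closedBall_zero_iff, le_div_iff₀ hw] at hζ
    rwa [mem_closedBall_zero_iff, norm_mul]
  have hFz₁ : F z₁ ≠ 0 := hzero z₁ (left_mem_segment ℝ z₁ z₂)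
  have hlog : Real.log (Real.exp M / ‖F z₁‖) = M - Real.log ‖F z₁‖ := by
    rw [Real.log_div (Real.exp_ne_zero M) (norm_ne_zero_iff.mpr hFz₁), Real.log_exp]
  have hwind := abs_im_integral_logDeriv_line_le hF hFne hρ hbound
  rw [hlog] at hwind
  rw [re_one_div_two_pi_I_mul, abs_div, abs_of_pos Real.two_pi_pos, div_le_iff₀ Real.two_pi_pos]
  have hlogρ : 0 < Real.log (R / ‖w‖) := Real.log_pos hρ
  calc _ ≤ _ := hwind
    _ = _ := by field_simp
end

section
/- Let (z_m) be a sequence of complex numbers ordered with nondecreasing modulus, and suppose there is a constant A > 0 such that for all t ≥ 0 the number n(t) of indices m with |z_m| ≤ t satisfies n(t) ≤ A t + A. Then the series Σ_m (1 + |z_m|)^{-1} (log(e + |z_m|))^{-2} converges. -/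
/-!
The first `m + 1` points lie in the closed disc of radius `|z_m|`, so the counting bound gives
`m + 1 ≤ A (1 + |z_m|)`. The weight `w(x) = (1 + x)⁻¹ log (e + x)⁻²` is decreasing, so Cauchy
condensation reduces the series to `∑ 2ⁿ w(|z_{2ⁿ}|)`, and `2ⁿ ≤ A (1 + |z_{2ⁿ}|)` bounds its
`n`-th term by `A (1 + |log A|)² / (n log 2)²`.
-/

open Filter

noncomputable def bertrandWeight (x : ℝ) : ℝ :=
  (1 + x)⁻¹ * (Real.log (Real.exp 1 + x) ^ 2)⁻¹

lemma one_le_log_exp_one_add {x : ℝ} (hx : 0 ≤ x) : 1 ≤ Real.log (Real.exp 1 + x) := by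
  rw [Real.le_log_iff_exp_le (by positivity)]
  linarith

lemma bertrandWeight_nonneg {x : ℝ} (hx : 0 ≤ x) : 0 ≤ bertrandWeight x := by
  unfold bertrandWeight
  positivity

lemma bertrandWeight_antitoneOn : AntitoneOn bertrandWeight (Set.Ici 0) := by
  intro x (hx : 0 ≤ x) y _ hxy
  have hlog : Real.log (Real.exp 1 + x) ≤ Real.log (Real.exp 1 + y) :=
    Real.log_le_log (by positivity) (by linarith)
  have hlog_pos := one_le_log_exp_one_add hx
  unfold bertrandWeight
  gcongr

/-- Since `log (e + x) ≥ 1`, the additive constant `log A` can be absorbed into a factor. -/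
lemma log_le_mul_log_exp_one_add {N A x : ℝ} (hN : 0 < N) (hA : 0 < A) (hx : 0 ≤ x)
    (hNx : N ≤ A * (1 + x)) :
    Real.log N ≤ (1 + |Real.log A|) * Real.log (Real.exp 1 + x) := by
  have hL := one_le_log_exp_one_add hx
  calc Real.log N ≤ Real.log (A * (1 + x)) := Real.log_le_log hN hNx
    _ = Real.log A + Real.log (1 + x) := Real.log_mul hA.ne' (by positivity)
    _ ≤ |Real.log A| * Real.log (Real.exp 1 + x) + Real.log (Real.exp 1 + x) := by
        gcongr
        · exact le_mul_of_one_le_right (abs_nonneg _) hL |>.trans' (le_abs_self _)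
        · linarith [Real.add_one_le_exp 0, Real.exp_one_gt_d9]
    _ = (1 + |Real.log A|) * Real.log (Real.exp 1 + x) := by ring

lemma mul_bertrandWeight_le {N A x : ℝ} (hN : 1 < N) (hA : 0 < A) (hx : 0 ≤ x)
    (hNx : N ≤ A * (1 + x)) :
    N * bertrandWeight x ≤ A * (1 + |Real.log A|) ^ 2 / Real.log N ^ 2 := by
  have hlogN : 0 < Real.log N := Real.log_pos hN
  have hlog := log_le_mul_log_exp_one_add (by linarith) hA hx hNx
  have hL := one_le_log_exp_one_add hx
  calc N * bertrandWeight x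
      = N / (1 + x) * (Real.log (Real.exp 1 + x) ^ 2)⁻¹ := by
        rw [bertrandWeight, div_eq_mul_inv, mul_assoc]
    _ ≤ A * ((Real.log N / (1 + |Real.log A|)) ^ 2)⁻¹ := by
        gcongr
        · exact (div_le_iff₀ (by linarith)).2 hNx
        · exact (div_le_iff₀' (by positivity)).2 hlog
    _ = A * (1 + |Real.log A|) ^ 2 / Real.log N ^ 2 := by
        rw [div_pow, inv_div, mul_div_assoc]

lemma add_one_le_natCard_setOf_le {α : Type*} [Preorder α] {a : ℕ → α} (ha : Monotone a)
    (m : ℕ) (hfin : {k | a k ≤ a m}.Finite) : m + 1 ≤ Nat.card {k | a k ≤ a m} := by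
  calc m + 1 = Nat.card (Set.Iic m) := by simp
    _ ≤ Nat.card {k | a k ≤ a m} := Nat.card_mono hfin fun k hk => ha hk

/-- If a sequence `(z_m)`, ordered with nondecreasing modulus, has counting function
`n(t) ≤ A t + A`, then `∑ (1 + |z_m|)⁻¹ (log (e + |z_m|))⁻²` converges. -/
theorem summable_of_counting_bound (z : ℕ → ℂ)
    (hmono : Monotone fun m => ‖z m‖)
    (A : ℝ) (hA : 0 < A)
    (hfin : ∀ t : ℝ, 0 ≤ t → {m : ℕ | ‖z m‖ ≤ t}.Finite)
    (hcount : ∀ t : ℝ, 0 ≤ t →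
      (Nat.card {m : ℕ | ‖z m‖ ≤ t} : ℝ) ≤ A * t + A) :
    Summable fun m : ℕ =>
      (1 + ‖z m‖)⁻¹ * ((Real.log (Real.exp 1 + ‖z m‖)) ^ 2)⁻¹ := by
  have hindex (m : ℕ) : (m : ℝ) + 1 ≤ A * (1 + ‖z m‖) := by
    have hcard := add_one_le_natCard_setOf_le hmono m (hfin _ (norm_nonneg _))
    have hcount_m := hcount _ (norm_nonneg (z m))
    calc (m : ℝ) + 1 ≤ Nat.card {k | ‖z k‖ ≤ ‖z m‖} := by exact_mod_cast hcard
      _ ≤ A * (1 + ‖z m‖) := by linarith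
  change Summable fun m => bertrandWeight ‖z m‖
  rw [← summable_condensed_iff_of_nonneg (fun _ => bertrandWeight_nonneg (norm_nonneg _))
    fun m n _ hmn => bertrandWeight_antitoneOn (norm_nonneg _) (norm_nonneg _) (hmono hmn)]
  refine .of_norm_bounded_eventually_nat
    ((Real.summable_one_div_nat_pow.2 one_lt_two).mul_left
      (A * (1 + |Real.log A|) ^ 2 / Real.log 2 ^ 2)) ?_
  filter_upwards [eventually_ge_atTop 1] with n hn
  have hpow : (2 : ℝ) ^ n ≤ A * (1 + ‖z (2 ^ n)‖) := by
    simpa using (hindex (2 ^ n)).trans' (le_add_of_nonneg_right zero_le_one)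
  have hbound := mul_bertrandWeight_le (one_lt_pow₀ one_lt_two (Nat.one_le_iff_ne_zero.1 hn))
    hA (norm_nonneg _) hpow
  rw [Real.norm_of_nonneg (mul_nonneg (by positivity) (bertrandWeight_nonneg (norm_nonneg _)))]
  refine hbound.trans_eq ?_
  rw [Real.log_pow]
  field_simp
end
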